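/- arXiv:1403.6501 — 3 statements merged into one kernel-verified Lean document; each statement's English description precedes it below -/
import Mathlib

section
/- Let K be a number field of degree n with unit rank r ≥ 1, fundamental units ε_1, ..., ε_r, and set F(ε) = {t_1Λ(ε_1)+...+t_rΛ(ε_r) : |t_j| ≤ 1/2 for all j}, D_v = max_{η ∈ F(ε)} η_v for each v|∞. Let 𝔞 be a nonzero ideal of O_K and B ≥ 1. Then every point P ∈ ℙ^N(K) with H_K(P) ≤ B whose associated ideal class equals Cl(𝔞) admits homogeneous coordinates x_0, ..., x_N ∈ 𝔞 such that: 𝔞 is the ideal generated by x_0, ..., x_N; |N_{K/ℚ}(x_i)| ≤ B·N(𝔞) for all i; and ‖x_i‖_v ≤ (B·N(𝔞))^{n_v/n} · exp(D_v) for all i and all Archimedean places v. -/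
open NumberField
open scoped nonZeroDivisors

variable {K : Type*} [Field K] [NumberField K]

/-- The logarithmic map `Λ : K* → ∏_{v|∞} ℝ`, `Λ(x)_v = log ‖x‖_v = log (|x|_v^{n_v})`. -/
noncomputable def logEmb (x : K) (w : InfinitePlace K) : ℝ :=
  Real.log ((w x) ^ w.mult)

/-- `H_∞(x_0,...,x_N) = ∏_{v|∞} max_i ‖x_i‖_v`. -/
noncomputable def Hinf {m : ℕ} (x : Fin m → K) : ℝ :=
  ∏ w : InfinitePlace K, ⨆ i, (w (x i)) ^ w.mult

/-!
Dividing the given coordinates by `c` yields coordinates `z` generating `𝔞` with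
`H_∞(z) ≤ B·N(𝔞)`. The vector `(log max_i ‖z_i‖_v - (n_v/n) log H_∞(z))_v` has coordinate sum
zero, so by Dirichlet's unit theorem it equals `∑ s_j Λ(ε_j)` for some real `s_j`. Multiplying `z`
by the unit `∏ ε_j^(-round s_j)` changes neither the ideal nor `H_∞`, and moves this vector to
`∑ (s_j - round s_j) Λ(ε_j) ∈ F(ε)`, whose `v`-coordinate is at most `D_v`.
-/

open Finset NumberField.Units NumberField.Units.dirichletUnitTheorem

section Field

variable {F : Type*} [Field F] {m : ℕ}

theorem logEmb_eq_mult_mul_log (x : F) (w : InfinitePlace F) :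
    logEmb x w = w.mult * Real.log (w x) := by
  rw [logEmb, Real.log_pow]

theorem logEmb_mul {a b : F} (ha : a ≠ 0) (hb : b ≠ 0) (w : InfinitePlace F) :
    logEmb (a * b) w = logEmb a w + logEmb b w := by
  simp only [logEmb_eq_mult_mul_log, map_mul,
    Real.log_mul (w.pos_iff.mpr ha).ne' (w.pos_iff.mpr hb).ne', mul_add]

theorem logEmb_zpow (x : F) (k : ℤ) (w : InfinitePlace F) :
    logEmb (x ^ k) w = k * logEmb x w := by
  simp only [logEmb_eq_mult_mul_log, map_zpow₀, Real.log_zpow]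
  ring

theorem logEmb_units_prod_zpow {ι : Type*} (s : Finset ι) (ε : ι → (𝓞 F)ˣ) (k : ι → ℤ)
    (w : InfinitePlace F) :
    logEmb ((∏ j ∈ s, ε j ^ k j : (𝓞 F)ˣ) : F) w = ∑ j ∈ s, (k j : ℝ) * logEmb (ε j : F) w := by
  classical
  induction s using Finset.induction_on with
  | empty => simp [logEmb]
  | insert j s hj ih =>
    rw [prod_insert hj, sum_insert hj, NumberField.Units.coe_mul,
      logEmb_mul (coe_ne_zero _) (coe_ne_zero _), ih, NumberField.Units.coe_zpow, logEmb_zpow]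

noncomputable def placeMax (z : Fin m → F) (w : InfinitePlace F) : ℝ :=
  ⨆ i, w (z i) ^ w.mult

theorem pow_mult_le_placeMax (z : Fin m → F) (i : Fin m) (w : InfinitePlace F) :
    w (z i) ^ w.mult ≤ placeMax z w :=
  le_ciSup (f := fun i => w (z i) ^ w.mult) (Set.finite_range _).bddAbove i

theorem placeMax_pos {z : Fin m → F} (hz : z ≠ 0) (w : InfinitePlace F) :
    0 < placeMax z w := by
  obtain ⟨i, hi⟩ := Function.ne_iff.mp hz
  exact (pow_pos (w.pos_iff.mpr hi) _).trans_le (pow_mult_le_placeMax z i w)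

theorem placeMax_smul (a : F) (z : Fin m → F) (w : InfinitePlace F) :
    placeMax (a • z) w = w a ^ w.mult * placeMax z w := by
  simp only [placeMax, Real.mul_iSup_of_nonneg (pow_nonneg (apply_nonneg w a) _), Pi.smul_apply,
    smul_eq_mul, map_mul, mul_pow]

end Field

theorem sum_logEmb_units (u : (𝓞 K)ˣ) : ∑ w, logEmb (u : K) w = 0 := by
  simpa only [logEmb_eq_mult_mul_log] using sum_mult_mul_log u

section Height

variable {m : ℕ}

theorem Hinf_eq_prod_placeMax (z : Fin m → K) : Hinf z = ∏ w, placeMax z w := rfl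

theorem Hinf_pos {z : Fin m → K} (hz : z ≠ 0) : 0 < Hinf z :=
  prod_pos fun w _ => placeMax_pos hz w

theorem Hinf_smul (a : K) (z : Fin m → K) :
    Hinf (a • z) = |Algebra.norm ℚ a| * Hinf z := by
  simp only [Hinf_eq_prod_placeMax, placeMax_smul, prod_mul_distrib,
    InfinitePlace.prod_eq_abs_norm]

theorem Hinf_units_smul (u : (𝓞 K)ˣ) (z : Fin m → K) : Hinf ((u : K) • z) = Hinf z := by
  rw [Hinf_smul, NumberField.Units.norm, Rat.cast_one, one_mul]

theorem abs_norm_le_Hinf (z : Fin m → K) (i : Fin m) : |(Algebra.norm ℚ (z i) : ℝ)| ≤ Hinf z := by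
  rw [← Rat.cast_abs, ← InfinitePlace.prod_eq_abs_norm]
  exact prod_le_prod (fun w _ => by positivity) fun w _ => pow_mult_le_placeMax z i w

end Height

namespace FractionalIdeal

variable {R L : Type*} [CommRing R] [Field L] [Algebra R L] [IsFractionRing R L] {ι : Type*}

theorem spanFinset_smul (s : Finset ι) (a : L) (z : ι → L) :
    spanFinset R s (a • z) = spanSingleton R⁰ a * spanFinset R s z := by
  rw [← coeToSubmodule_inj, coe_mul, coe_spanSingleton, spanFinset_coe, spanFinset_coe,
    Submodule.span_singleton_mul, Submodule.smul_span, ← Set.image_smul, Set.image_image]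
  rfl

theorem mem_spanFinset {s : Finset ι} (z : ι → L) {i : ι} (hi : i ∈ s) :
    z i ∈ spanFinset R s z := by
  rw [← mem_coe, spanFinset_coe]
  exact Submodule.subset_span (Set.mem_image_of_mem z hi)

theorem spanSingleton_algebraMap_units (u : Rˣ) :
    spanSingleton R⁰ (algebraMap R L u) = 1 := by
  rw [← coeIdeal_span_singleton, Ideal.span_singleton_eq_top.mpr u.isUnit, coeIdeal_top]

end FractionalIdeal

section FundamentalSystem

variable {r : ℕ}

def IsFundamentalSystem (ε : Fin r → (𝓞 K)ˣ) : Prop :=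
  ∀ u : (𝓞 K)ˣ, ∃ (ζ : (𝓞 K)ˣ) (m : Fin r → ℤ), IsOfFinOrder ζ ∧ u = ζ * ∏ j, ε j ^ m j

/-- The `v`-coordinates of the points of the fundamental parallelotope `F(ε)`. -/
def fundParallelotopeCoords (ε : Fin r → (𝓞 K)ˣ) (w : InfinitePlace K) : Set ℝ :=
  {s | ∃ t : Fin r → ℝ, (∀ j, |t j| ≤ 1 / 2) ∧ s = ∑ j, t j * logEmb ((ε j : 𝓞 K) : K) w}

variable {ε : Fin r → (𝓞 K)ˣ}

theorem span_logEmbedding_eq_top (hfund : IsFundamentalSystem ε) :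
    Submodule.span ℝ (Set.range fun j => logEmbedding K (Additive.ofMul (ε j))) = ⊤ := by
  rw [eq_top_iff, ← unitLattice_span_eq_top K, Submodule.span_le]
  rintro _ ⟨x, -, rfl⟩
  obtain ⟨ζ, m, hζ, hx⟩ := hfund x.toMul
  have hx' : x = Additive.ofMul ζ + ∑ j, m j • Additive.ofMul (ε j) := by
    rw [← ofMul_toMul x, hx, ofMul_mul, ofMul_prod]
    simp only [ofMul_zpow]
  show logEmbedding K x ∈ _
  rw [hx', map_add, logEmbedding_eq_zero_iff.mpr hζ, zero_add, map_sum]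
  exact sum_mem fun j _ => by
    rw [map_zsmul]
    exact zsmul_mem (Submodule.subset_span (Set.mem_range_self j)) _

theorem exists_eq_sum_mul_logEmb_of_sum_eq_zero (hfund : IsFundamentalSystem ε)
    {f : InfinitePlace K → ℝ} (hf : ∑ w, f w = 0) :
    ∃ s : Fin r → ℝ, ∀ w, f w = ∑ j, s j * logEmb (ε j : K) w := by
  have hmem : (fun w : {w : InfinitePlace K // w ≠ w₀} => f w) ∈
      Submodule.span ℝ (Set.range fun j => logEmbedding K (Additive.ofMul (ε j))) := by
    rw [span_logEmbedding_eq_top hfund]; trivial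
  obtain ⟨s, hs⟩ := (Submodule.mem_span_range_iff_exists_fun ℝ).mp hmem
  set g : InfinitePlace K → ℝ := fun w => f w - ∑ j, s j * logEmb (ε j : K) w
  have hg : ∀ w ≠ w₀, g w = 0 := fun w hw => by
    have := congrFun hs ⟨w, hw⟩
    simp only [Finset.sum_apply, Pi.smul_apply, smul_eq_mul, logEmbedding_component] at this
    simp only [g, sub_eq_zero, ← this, logEmb_eq_mult_mul_log]
  -- `logEmbedding` forgets the `w₀`-coordinate; it is recovered from the coordinate sum.
  have hg₀ : g w₀ = 0 := by
    rw [← Finset.sum_eq_single_of_mem w₀ (mem_univ _) fun w _ => hg w, sum_sub_distrib, hf,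
      sum_comm]
    simp only [← mul_sum, sum_logEmb_units, mul_zero, sum_const_zero, sub_zero]
  refine ⟨s, fun w => sub_eq_zero.mp ?_⟩
  obtain rfl | hw := eq_or_ne w w₀
  exacts [hg₀, hg w hw]

theorem exists_logEmb_units_add_le (hfund : IsFundamentalSystem ε) {D : InfinitePlace K → ℝ}
    (hD : ∀ w, D w ∈ upperBounds (fundParallelotopeCoords ε w))
    {f : InfinitePlace K → ℝ} (hf : ∑ w, f w = 0) :
    ∃ u : (𝓞 K)ˣ, ∀ w, logEmb (u : K) w + f w ≤ D w := by
  obtain ⟨s, hs⟩ := exists_eq_sum_mul_logEmb_of_sum_eq_zero hfund hf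
  refine ⟨∏ j, ε j ^ (-round (s j)), fun w => hD w ⟨fun j => s j - round (s j),
    fun j => abs_sub_round (s j), ?_⟩⟩
  rw [logEmb_units_prod_zpow, hs, ← sum_add_distrib]
  refine sum_congr rfl fun j _ => ?_
  push_cast
  ring

theorem exists_placeMax_units_smul_le (hfund : IsFundamentalSystem ε) {D : InfinitePlace K → ℝ}
    (hD : ∀ w, D w ∈ upperBounds (fundParallelotopeCoords ε w))
    {m : ℕ} {z : Fin m → K} (hz : z ≠ 0) :
    ∃ u : (𝓞 K)ˣ, ∀ w, placeMax ((u : K) • z) w ≤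
      Hinf z ^ ((w.mult : ℝ) / Module.finrank ℚ K) * Real.exp (D w) := by
  set f : InfinitePlace K → ℝ := fun w =>
    Real.log (placeMax z w) - (w.mult : ℝ) / Module.finrank ℚ K * Real.log (Hinf z)
  have hf : ∑ w, f w = 0 := by
    have hn : (Module.finrank ℚ K : ℝ) ≠ 0 := by exact_mod_cast Module.finrank_pos.ne'
    rw [sum_sub_distrib, ← Real.log_prod fun w _ => (placeMax_pos hz w).ne',
      ← Hinf_eq_prod_placeMax, ← sum_mul, ← sum_div, ← Nat.cast_sum, InfinitePlace.sum_mult_eq,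
      div_self hn, one_mul, sub_self]
  obtain ⟨u, hu⟩ := exists_logEmb_units_add_le hfund hD hf
  refine ⟨u, fun w => ?_⟩
  have hu_pos : 0 < w (u : K) ^ w.mult := pow_pos (pos_at_place u w) _
  have hH_pos : 0 < Hinf z ^ ((w.mult : ℝ) / Module.finrank ℚ K) :=
    Real.rpow_pos_of_pos (Hinf_pos hz) _
  rw [← Real.log_le_log_iff (placeMax_pos (smul_ne_zero (coe_ne_zero u) hz) w)
      (mul_pos hH_pos (Real.exp_pos _)),
    placeMax_smul, Real.log_mul hu_pos.ne' (placeMax_pos hz w).ne',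
    Real.log_mul hH_pos.ne' (Real.exp_pos _).ne',
    Real.log_rpow (Hinf_pos hz), Real.log_exp]
  have := hu w
  simp only [logEmb, f] at this
  linarith

end FundamentalSystem

theorem statement4_general {N : ℕ} (r : ℕ) (ε : Fin r → (𝓞 K)ˣ)
    (hfund : ∀ u : (𝓞 K)ˣ, ∃ (ζ : (𝓞 K)ˣ) (m : Fin r → ℤ),
      IsOfFinOrder ζ ∧ u = ζ * ∏ j, ε j ^ m j)
    (D : InfinitePlace K → ℝ)
    (hD : ∀ w : InfinitePlace K, IsGreatest
      {s : ℝ | ∃ t : Fin r → ℝ, (∀ j, |t j| ≤ 1 / 2) ∧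
        s = ∑ j, t j * logEmb ((ε j : 𝓞 K) : K) w} (D w))
    (𝔞 : Ideal (𝓞 K)) (B : ℝ)
    (P : Projectivization K (Fin (N + 1) → K))
    (y : Fin (N + 1) → K) (hy : y ≠ 0) (hyP : Projectivization.mk K y hy = P)
    (c : K) (hc : c ≠ 0)
    (hCl : FractionalIdeal.spanFinset (𝓞 K) Finset.univ y =
      FractionalIdeal.spanSingleton (𝓞 K)⁰ c * (𝔞 : FractionalIdeal (𝓞 K)⁰ K))
    (hHB : Hinf y ≤ B * FractionalIdeal.absNorm
      (FractionalIdeal.spanFinset (𝓞 K) Finset.univ y)) :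
    ∃ (x : Fin (N + 1) → K) (hx : x ≠ 0),
      Projectivization.mk K x hx = P ∧
      (∀ i, x i ∈ (𝔞 : FractionalIdeal (𝓞 K)⁰ K)) ∧
      FractionalIdeal.spanFinset (𝓞 K) Finset.univ x = (𝔞 : FractionalIdeal (𝓞 K)⁰ K) ∧
      (∀ i, |(Algebra.norm ℚ (x i) : ℝ)| ≤ B * Ideal.absNorm 𝔞) ∧
      (∀ i, ∀ w : InfinitePlace K,
        (w (x i)) ^ w.mult ≤
          (B * Ideal.absNorm 𝔞) ^ ((w.mult : ℝ) / (Module.finrank ℚ K : ℝ)) *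
            Real.exp (D w)) := by
  set z : Fin (N + 1) → K := c⁻¹ • y
  have hyz : y = c • z := (smul_inv_smul₀ hc y).symm
  have hz : z ≠ 0 := smul_ne_zero (inv_ne_zero hc) hy
  rw [hyz, FractionalIdeal.spanFinset_smul] at hCl hHB
  have hz_span : FractionalIdeal.spanFinset (𝓞 K) univ z = 𝔞 :=
    mul_left_cancel₀ (FractionalIdeal.spanSingleton_ne_zero_iff.mpr hc) hCl
  have hz_height : Hinf z ≤ B * Ideal.absNorm 𝔞 := by
    have hc_norm : (0 : ℝ) < |Algebra.norm ℚ c| := by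
      exact_mod_cast abs_pos.mpr (Algebra.norm_ne_zero_iff.mpr hc)
    rw [Hinf_smul, hz_span, map_mul, FractionalIdeal.absNorm_span_singleton,
      FractionalIdeal.coeIdeal_absNorm, Rat.cast_mul, Rat.cast_natCast, mul_left_comm] at hHB
    exact le_of_mul_le_mul_left hHB hc_norm
  obtain ⟨u, hu⟩ := exists_placeMax_units_smul_le hfund (fun w => (hD w).2) hz
  have hx_span : FractionalIdeal.spanFinset (𝓞 K) univ ((u : K) • z) = 𝔞 := by
    rw [FractionalIdeal.spanFinset_smul, hz_span,
      FractionalIdeal.spanSingleton_algebraMap_units, one_mul]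
  refine ⟨(u : K) • z, smul_ne_zero (coe_ne_zero u) hz, ?_,
    fun i => hx_span ▸ FractionalIdeal.mem_spanFinset _ (mem_univ i), hx_span,
    fun i => (abs_norm_le_Hinf _ i).trans ((Hinf_units_smul u z).trans_le hz_height),
    fun i w => (pow_mult_le_placeMax _ i w).trans ((hu w).trans ?_)⟩
  · rw [← hyP, Projectivization.mk_eq_mk_iff']
    exact ⟨(u : K) * c⁻¹, mul_smul _ _ _⟩
  · gcongr
    exact (Hinf_pos hz).le

/-- Every point `P ∈ ℙ^N(K)` with `H_K(P) ≤ B` and associated ideal class `Cl(𝔞)`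
(expressed via homogeneous coordinates `y` of `P` whose span is `c⁻¹·𝔞` and with
`H_∞(y) ≤ B·N(span y)`, which by `H_K(P) = H_∞(y)/N(span y)` is exactly
`H_K(P) ≤ B` and `Cl(P) = Cl(𝔞)`) admits homogeneous coordinates `x_0,...,x_N ∈ 𝔞`
generating `𝔞`, with `|N_{K/ℚ}(x_i)| ≤ B·N(𝔞)` and
`‖x_i‖_v ≤ (B·N(𝔞))^{n_v/n}·exp(D_v)` for all `i` and all `v | ∞`. -/
theorem statement4 {N : ℕ} (r : ℕ) (hr : 1 ≤ r) (ε : Fin r → (𝓞 K)ˣ)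
    (hfund : ∀ u : (𝓞 K)ˣ, ∃ (ζ : (𝓞 K)ˣ) (m : Fin r → ℤ),
      IsOfFinOrder ζ ∧ u = ζ * ∏ j, ε j ^ m j)
    (D : InfinitePlace K → ℝ)
    (hD : ∀ w : InfinitePlace K, IsGreatest
      {s : ℝ | ∃ t : Fin r → ℝ, (∀ j, |t j| ≤ 1 / 2) ∧
        s = ∑ j, t j * logEmb ((ε j : 𝓞 K) : K) w} (D w))
    (𝔞 : Ideal (𝓞 K)) (h𝔞 : 𝔞 ≠ 0) (B : ℝ) (hB : 1 ≤ B)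
    (P : Projectivization K (Fin (N + 1) → K))
    (y : Fin (N + 1) → K) (hy : y ≠ 0) (hyP : Projectivization.mk K y hy = P)
    (c : K) (hc : c ≠ 0)
    (hCl : FractionalIdeal.spanFinset (𝓞 K) Finset.univ y =
      FractionalIdeal.spanSingleton (𝓞 K)⁰ c * (𝔞 : FractionalIdeal (𝓞 K)⁰ K))
    (hHB : Hinf y ≤ B * FractionalIdeal.absNorm
      (FractionalIdeal.spanFinset (𝓞 K) Finset.univ y)) :
    ∃ (x : Fin (N + 1) → K) (hx : x ≠ 0),
      Projectivization.mk K x hx = P ∧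
      (∀ i, x i ∈ (𝔞 : FractionalIdeal (𝓞 K)⁰ K)) ∧
      FractionalIdeal.spanFinset (𝓞 K) Finset.univ x = (𝔞 : FractionalIdeal (𝓞 K)⁰ K) ∧
      (∀ i, |(Algebra.norm ℚ (x i) : ℝ)| ≤ B * Ideal.absNorm 𝔞) ∧
      (∀ i, ∀ w : InfinitePlace K,
        (w (x i)) ^ w.mult ≤
          (B * Ideal.absNorm 𝔞) ^ ((w.mult : ℝ) / (Module.finrank ℚ K : ℝ)) *
            Real.exp (D w)) :=
  statement4_general r ε hfund D hD 𝔞 B P y hy hyP c hc hCl hHB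
end

section
/- Every nonzero element x ∈ C(𝔞,B) can be written as x = u·y where u ∈ O_K* is a unit, y ∈ I(𝔞,B), and ‖u‖_v ≤ (B·N(𝔞))^{n_v/n}·exp(D_v − A_v) for every Archimedean place v, where A_v = min_{y ∈ I(𝔞,B)} Λ(y)_v. -/
open NumberField

open scoped nonZeroDivisors

variable {K : Type*} [Field K] [NumberField K]

/-- The set `C(𝔞,B) = {x ∈ 𝔞 : ‖x‖_v ≤ (B·N(𝔞))^{n_v/n}exp(D_v) ∀ v|∞,
|N_{K/ℚ}(x)| ≤ B·N(𝔞)}`. -/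
def Cset (𝔞 : Ideal (𝓞 K)) (B : ℝ) (D : InfinitePlace K → ℝ) : Set K :=
  {x : K | x ∈ (𝔞 : FractionalIdeal (𝓞 K)⁰ K) ∧
    (∀ w : InfinitePlace K,
      (w x) ^ w.mult ≤ (B * Ideal.absNorm 𝔞) ^ ((w.mult : ℝ) / (Module.finrank ℚ K : ℝ)) *
        Real.exp (D w)) ∧
    |(Algebra.norm ℚ x : ℝ)| ≤ B * Ideal.absNorm 𝔞}

lemma le_mul_exp_sub_of_mul_le {a b c d s : ℝ} (ha : 0 ≤ a) (hb : 0 < b)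
    (hs : s ≤ Real.log b) (h : a * b ≤ c * Real.exp d) : a ≤ c * Real.exp (d - s) :=
  calc a = a * Real.exp s / Real.exp s := (mul_div_cancel_right₀ a (Real.exp_pos s).ne').symm
    _ ≤ a * b / Real.exp s := by
      gcongr
      exact (Real.le_log_iff_exp_le hb).mp hs
    _ ≤ c * Real.exp d / Real.exp s := by gcongr
    _ = c * Real.exp (d - s) := by rw [Real.exp_sub, mul_div_assoc]

theorem statement9_general (𝔞 : Ideal (𝓞 K)) (B : ℝ)
    (D : InfinitePlace K → ℝ) (I : Finset K)
    -- `I(𝔞,B)` is a set of generators for the nonzero principal ideals contained in `𝔞`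
    -- of norm at most `B·N(𝔞)`:
    (hIcover : ∀ x : K, x ∈ (𝔞 : FractionalIdeal (𝓞 K)⁰ K) → x ≠ 0 →
      |(Algebra.norm ℚ x : ℝ)| ≤ B * Ideal.absNorm 𝔞 →
      ∃ y ∈ I, ∃ u : (𝓞 K)ˣ, x = ((u : 𝓞 K) : K) * y)
    (A : InfinitePlace K → ℝ)
    (hA : ∀ w : InfinitePlace K,
      IsLeast {s : ℝ | ∃ y ∈ I, s = Real.log ((w y) ^ w.mult)} (A w)) :
    ∀ x ∈ Cset 𝔞 B D, x ≠ 0 →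
      ∃ (u : (𝓞 K)ˣ), ∃ y ∈ I, x = ((u : 𝓞 K) : K) * y ∧
        ∀ w : InfinitePlace K,
          (w ((u : 𝓞 K) : K)) ^ w.mult ≤
            (B * Ideal.absNorm 𝔞) ^ ((w.mult : ℝ) / (Module.finrank ℚ K : ℝ)) *
              Real.exp (D w - A w) := by
  rintro x ⟨hxmem, hxbound, hxnorm⟩ hx0
  obtain ⟨y, hyI, u, rfl⟩ := hIcover _ hxmem hx0 hxnorm
  refine ⟨u, y, hyI, rfl, fun w => ?_⟩
  have hy0 : y ≠ 0 := right_ne_zero_of_mul hx0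
  refine le_mul_exp_sub_of_mul_le (by positivity) (pow_pos (w.pos_iff.mpr hy0) _)
    ((hA w).2 ⟨y, hyI, rfl⟩) ?_
  simpa only [map_mul, mul_pow] using hxbound w

/-- Every nonzero `x ∈ C(𝔞,B)` can be written `x = u·y` with `u ∈ O_K*`, `y ∈ I(𝔞,B)`,
and `‖u‖_v ≤ (B·N(𝔞))^{n_v/n}·exp(D_v − A_v)` for every Archimedean place `v`, where
`A_v = min_{y ∈ I(𝔞,B)} Λ(y)_v`. -/
theorem statement9 (𝔞 : Ideal (𝓞 K)) (h𝔞 : 𝔞 ≠ 0) (B : ℝ) (hB : 1 ≤ B)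
    (D : InfinitePlace K → ℝ) (I : Finset K)
    -- `I(𝔞,B)` is a set of generators for the nonzero principal ideals contained in `𝔞`
    -- of norm at most `B·N(𝔞)`:
    (hImem : ∀ y ∈ I, y ∈ (𝔞 : FractionalIdeal (𝓞 K)⁰ K) ∧ y ≠ 0 ∧
      |(Algebra.norm ℚ y : ℝ)| ≤ B * Ideal.absNorm 𝔞)
    (hIcover : ∀ x : K, x ∈ (𝔞 : FractionalIdeal (𝓞 K)⁰ K) → x ≠ 0 →
      |(Algebra.norm ℚ x : ℝ)| ≤ B * Ideal.absNorm 𝔞 →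
      ∃ y ∈ I, ∃ u : (𝓞 K)ˣ, x = ((u : 𝓞 K) : K) * y)
    (A : InfinitePlace K → ℝ)
    (hA : ∀ w : InfinitePlace K,
      IsLeast {s : ℝ | ∃ y ∈ I, s = Real.log ((w y) ^ w.mult)} (A w)) :
    ∀ x ∈ Cset 𝔞 B D, x ≠ 0 →
      ∃ (u : (𝓞 K)ˣ), ∃ y ∈ I, x = ((u : 𝓞 K) : K) * y ∧
        ∀ w : InfinitePlace K,
          (w ((u : 𝓞 K) : K)) ^ w.mult ≤
            (B * Ideal.absNorm 𝔞) ^ ((w.mult : ℝ) / (Module.finrank ℚ K : ℝ)) *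
              Real.exp (D w - A w) :=
  statement9_general 𝔞 B D I hIcover A hA
end

section
/- Let g_1, ..., g_t be all numbers of the form g = ε_1^{n_1}···ε_r^{n_r}·y with y ∈ I(𝔞,B), (n_1,...,n_r) ∈ ℤ^r ∩ T^{-1}(U(𝔞,B)), and Φ(g) ∈ P(𝔞,B). Then 0, g_1, ..., g_t form a complete set of representatives for the orbit space C(𝔞,B)/μ_K: each g_i ∈ C(𝔞,B), the μ_K-orbits of 0, g_1, ..., g_t are pairwise distinct, and every element of C(𝔞,B) lies in the μ_K-orbit of some g_i or of 0. -/
/-!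
A nonzero `x ∈ C(𝔞,B)` is `u y` with `y ∈ I(𝔞,B)`, and Dirichlet's theorem writes the unit as
`u = ζ ε^m` with `ζ` a root of unity. Roots of unity have absolute value one at every place, so
`g = ε^m y` is still in `P(𝔞,B)`, and at each place `log |ε^m|_v = log |g|_v - log |y|_v ≤ L_v`
since `A_v ≤ log |y|_v`. These are the first `r` inequalities of `T m ∈ U(𝔞,B)`; the product
formula for the unit `ε^m` turns the one at the last place into the lower bound on `∑ (T m)_j`.
Conversely, two candidates in one `μ_K`-orbit have associate, hence equal, `y`, and then units
differing by a root of unity, so uniqueness of the decomposition `u = ζ ε^m` forces equal exponents.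
-/

open NumberField

open scoped nonZeroDivisors

variable {K : Type*} [Field K] [NumberField K]

/-- `L_v = (n_v/n)(log B + log N(𝔞)) + D_v − A_v`. -/
noncomputable def Lconst (B : ℝ) (𝔞 : Ideal (𝓞 K)) (D A : InfinitePlace K → ℝ)
    (w : InfinitePlace K) : ℝ :=
  ((w.mult : ℝ) / (Module.finrank ℚ K : ℝ)) * (Real.log B + Real.log (Ideal.absNorm 𝔞)) +
    D w - A w

def IsRootOfUnity (ζ : K) : Prop := ∃ k : ℕ, 0 < k ∧ ζ ^ k = 1

open InfinitePlace

lemma Real.log_le_of_le_rpow_mul_exp {t c a d : ℝ} (ht : 0 < t) (hc : 0 < c)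
    (h : t ≤ c ^ a * Real.exp d) : Real.log t ≤ a * Real.log c + d := by
  refine (Real.log_le_log ht h).trans_eq ?_
  rw [Real.log_mul (Real.rpow_pos_of_pos hc a).ne' (Real.exp_pos d).ne', Real.log_rpow hc,
    Real.log_exp]

lemma coe_unit_mul_mem_coeIdeal {R L : Type*} [CommRing R] [Field L] [Algebra R L]
    [IsFractionRing R L] {𝔞 : Ideal R} (u : Rˣ) {y : L} (hy : y ∈ (𝔞 : FractionalIdeal R⁰ L)) :
    algebraMap R L u * y ∈ (𝔞 : FractionalIdeal R⁰ L) := by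
  simpa [Algebra.smul_def] using Submodule.smul_mem _ (u : R) hy

lemma eq_of_prod_zpow_eq_mul_prod_zpow {G ι : Type*} [CommGroup G] [Fintype ι] {ε : ι → G}
    (hfund : ∀ v : G, ∃! p : G × (ι → ℤ), IsOfFinOrder p.1 ∧ v = p.1 * ∏ j, ε j ^ p.2 j)
    {t : G} (ht : IsOfFinOrder t) {m m' : ι → ℤ}
    (h : ∏ j, ε j ^ m' j = t * ∏ j, ε j ^ m j) : m' = m := by
  obtain ⟨p, -, hp⟩ := hfund (∏ j, ε j ^ m' j)
  have h₁ := hp (1, m') ⟨IsOfFinOrder.one, (one_mul _).symm⟩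
  have h₂ := hp (t, m) ⟨ht, h⟩
  exact congrArg Prod.snd (h₁.trans h₂.symm)

section Field

variable {F : Type*} [Field F]

lemma IsRootOfUnity.exists_unit_isOfFinOrder {ζ : F} (hζ : IsRootOfUnity ζ) :
    ∃ t : (𝓞 F)ˣ, IsOfFinOrder t ∧ (t : F) = ζ := by
  obtain ⟨k, hk, hζk⟩ := hζ
  let ζ' : 𝓞 F := ⟨ζ, IsIntegral.of_pow hk (hζk ▸ isIntegral_one)⟩
  have hζ'k : ζ' ^ k = 1 := by
    ext
    exact hζk
  exact ⟨Units.ofPowEqOne ζ' k hζ'k hk.ne',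
    isOfFinOrder_iff_pow_eq_one.mpr ⟨k, hk, Units.pow_ofPowEqOne _ _⟩, rfl⟩

lemma isRootOfUnity_coe_of_isOfFinOrder {t : (𝓞 F)ˣ}
    (ht : IsOfFinOrder t) : IsRootOfUnity (t : F) := by
  obtain ⟨k, hk, htk⟩ := isOfFinOrder_iff_pow_eq_one.mp ht
  exact ⟨k, hk, by rw [← NumberField.Units.coe_pow, htk, NumberField.Units.coe_one]⟩

lemma NumberField.Units.coe_prod_zpow {ι : Type*} [Fintype ι] (ε : ι → (𝓞 F)ˣ)
    (m : ι → ℤ) : ((∏ j, ε j ^ m j : (𝓞 F)ˣ) : F) = ∏ j, (ε j : F) ^ m j := by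
  simp_rw [← Units.coe_zpow]
  exact map_prod ((algebraMap (𝓞 F) F).toMonoidHom.comp (Units.coeHom (𝓞 F))) _ _

lemma NumberField.InfinitePlace.log_pow_mult_prod_zpow {ι : Type*} [Fintype ι]
    (w : InfinitePlace F) (ε : ι → (𝓞 F)ˣ) (m : ι → ℤ) :
    Real.log (w (∏ j, ε j ^ m j : (𝓞 F)ˣ) ^ w.mult) =
      ∑ k, (m k : ℝ) * Real.log (w (ε k) ^ w.mult) := by
  have hne : ∀ k ∈ Finset.univ, w ((ε k : F) ^ m k) ≠ 0 := fun k _ =>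
    (pos_iff.mpr (zpow_ne_zero _ (Units.coe_ne_zero _))).ne'
  rw [Units.coe_prod_zpow, Real.log_pow, map_prod, Real.log_prod hne, Finset.mul_sum]
  refine Finset.sum_congr rfl fun k _ => ?_
  rw [map_zpow₀, Real.log_zpow, Real.log_pow]
  ring

lemma mulVec_eq_log_pow_mult {r : ℕ} {e : Fin (r + 1) ≃ InfinitePlace F}
    {ε : Fin r → (𝓞 F)ˣ} {T : Matrix (Fin r) (Fin r) ℝ}
    (hT : ∀ j k, T j k = Real.log ((e j.castSucc (((ε k : 𝓞 F) : F))) ^ (e j.castSucc).mult))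
    (m : Fin r → ℤ) (j : Fin r) :
    T.mulVec (fun k => (m k : ℝ)) j =
      Real.log (e j.castSucc (∏ k, ε k ^ m k : (𝓞 F)ˣ) ^ (e j.castSucc).mult) := by
  simp only [InfinitePlace.log_pow_mult_prod_zpow, Matrix.mulVec, dotProduct, hT, mul_comm]

end Field

lemma NumberField.InfinitePlace.apply_mul_of_isOfFinOrder (w : InfinitePlace K) {t : (𝓞 K)ˣ}
    (ht : IsOfFinOrder t) (x : K) : w (t * x) = w x := by
  rw [map_mul, (Units.mem_torsion K).mp ((CommGroup.mem_torsion _).mpr ht) w, one_mul]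

lemma abs_norm_coe_unit_mul (u : (𝓞 K)ˣ) (y : K) :
    |(Algebra.norm ℚ ((u : K) * y) : ℝ)| = |(Algebra.norm ℚ y : ℝ)| := by
  rw [map_mul, Rat.cast_mul, abs_mul, ← Rat.cast_abs, Units.norm, Rat.cast_one, one_mul]

lemma sum_castSucc_log_pow_mult {r : ℕ} (e : Fin (r + 1) ≃ InfinitePlace K) (u : (𝓞 K)ˣ) :
    ∑ j : Fin r, Real.log (e j.castSucc u ^ (e j.castSucc).mult) =
      -Real.log (e (Fin.last r) u ^ (e (Fin.last r)).mult) := by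
  have h := Units.sum_mult_mul_log u
  rw [← e.sum_comp, Fin.sum_univ_castSucc] at h
  simp only [Real.log_pow]
  linarith

lemma log_pow_mult_le_Lconst {𝔞 : Ideal (𝓞 K)} (h𝔞 : 𝔞 ≠ 0) {B : ℝ} (hB : 0 < B)
    {D A : InfinitePlace K → ℝ} {w : InfinitePlace K} {x y : K} (hx : x ≠ 0) (hy : y ≠ 0)
    (hA : A w ≤ Real.log (w y ^ w.mult))
    (hP : w (x * y) ^ w.mult ≤
      (B * Ideal.absNorm 𝔞) ^ ((w.mult : ℝ) / (Module.finrank ℚ K : ℝ)) * Real.exp (D w)) :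
    Real.log (w x ^ w.mult) ≤ Lconst B 𝔞 D A w := by
  have hN : (0 : ℝ) < Ideal.absNorm 𝔞 := by
    exact_mod_cast Nat.pos_of_ne_zero (Ideal.absNorm_eq_zero_iff.not.mpr h𝔞)
  have hxy := Real.log_le_of_le_rpow_mul_exp (pow_pos (pos_iff.mpr (mul_ne_zero hx hy)) _)
    (mul_pos hB hN) hP
  rw [Real.log_mul hB.ne' hN.ne', map_mul, mul_pow,
    Real.log_mul (pow_pos (pos_iff.mpr hx) _).ne' (pow_pos (pos_iff.mpr hy) _).ne'] at hxy
  unfold Lconst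
  linarith

/-- The set `{g_1, …, g_t}`. -/
def Gset {r : ℕ} (e : Fin (r + 1) ≃ InfinitePlace K) (ε : Fin r → (𝓞 K)ˣ)
    (T : Matrix (Fin r) (Fin r) ℝ) (𝔞 : Ideal (𝓞 K)) (B : ℝ) (D A : InfinitePlace K → ℝ)
    (I : Finset K) : Set K :=
  {g : K | ∃ y ∈ I, ∃ m : Fin r → ℤ,
    (∀ j : Fin r, T.mulVec (fun k => (m k : ℝ)) j ≤ Lconst B 𝔞 D A (e j.castSucc)) ∧
    -(Lconst B 𝔞 D A (e (Fin.last r))) ≤ ∑ j, T.mulVec (fun k => (m k : ℝ)) j ∧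
    g = ((∏ j, ε j ^ m j : (𝓞 K)ˣ) : 𝓞 K) * y ∧
    (∀ w : InfinitePlace K,
      (w g) ^ w.mult ≤
        (B * Ideal.absNorm 𝔞) ^ ((w.mult : ℝ) / (Module.finrank ℚ K : ℝ)) *
          Real.exp (D w))}

section Gset

variable {r : ℕ} {e : Fin (r + 1) ≃ InfinitePlace K} {ε : Fin r → (𝓞 K)ˣ}
  {T : Matrix (Fin r) (Fin r) ℝ} {𝔞 : Ideal (𝓞 K)} {B : ℝ} {D A : InfinitePlace K → ℝ}
  {I : Finset K}

lemma Gset_subset_Cset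
    (hImem : ∀ y ∈ I, y ∈ (𝔞 : FractionalIdeal (𝓞 K)⁰ K) ∧ y ≠ 0 ∧
      |(Algebra.norm ℚ y : ℝ)| ≤ B * Ideal.absNorm 𝔞) :
    Gset e ε T 𝔞 B D A I ⊆ Cset 𝔞 B D := by
  rintro _ ⟨y, hyI, m, -, -, rfl, hP⟩
  obtain ⟨hy𝔞, -, hyN⟩ := hImem y hyI
  exact ⟨coe_unit_mul_mem_coeIdeal _ hy𝔞, hP, (abs_norm_coe_unit_mul _ y).trans_le hyN⟩

lemma ne_zero_of_mem_Gset (hI : ∀ y ∈ I, y ≠ 0) {g : K} (hg : g ∈ Gset e ε T 𝔞 B D A I) :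
    g ≠ 0 := by
  obtain ⟨y, hyI, m, -, -, rfl, -⟩ := hg
  exact mul_ne_zero (Units.coe_ne_zero _) (hI y hyI)

lemma eq_of_mem_Gset_of_eq_mul
    (hfund : ∀ v : (𝓞 K)ˣ, ∃! p : (𝓞 K)ˣ × (Fin r → ℤ),
      IsOfFinOrder p.1 ∧ v = p.1 * ∏ j, ε j ^ p.2 j)
    (hI : ∀ y ∈ I, y ≠ 0)
    (hIdist : ∀ y ∈ I, ∀ y' ∈ I, (∃ u : (𝓞 K)ˣ, y' = ((u : 𝓞 K) : K) * y) → y' = y)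
    {g g' : K} (hg : g ∈ Gset e ε T 𝔞 B D A I) (hg' : g' ∈ Gset e ε T 𝔞 B D A I)
    {ζ : K} (hζ : IsRootOfUnity ζ) (h : g' = ζ * g) : g' = g := by
  obtain ⟨y, hyI, m, -, -, rfl, -⟩ := hg
  obtain ⟨y', hyI', m', -, -, rfl, -⟩ := hg'
  obtain ⟨t, ht, rfl⟩ := hζ.exists_unit_isOfFinOrder
  have hy : y' = y := by
    refine hIdist y hyI y' hyI' ⟨(∏ j, ε j ^ m' j)⁻¹ * (t * ∏ j, ε j ^ m j), ?_⟩
    apply mul_left_cancel₀ (Units.coe_ne_zero (∏ j, ε j ^ m' j))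
    rw [h, ← mul_assoc, ← mul_assoc, ← Units.coe_mul, ← Units.coe_mul, mul_inv_cancel_left]
  rw [hy] at h ⊢
  have hu : ∏ j, ε j ^ m' j = t * ∏ j, ε j ^ m j := Units.coe_injective K <|
    mul_right_cancel₀ (hI y hyI) (by simpa only [Units.coe_mul, mul_assoc] using h)
  rw [eq_of_prod_zpow_eq_mul_prod_zpow hfund ht hu]

lemma exists_mem_Gset_of_mem_Cset
    (hfund : ∀ v : (𝓞 K)ˣ, ∃! p : (𝓞 K)ˣ × (Fin r → ℤ),
      IsOfFinOrder p.1 ∧ v = p.1 * ∏ j, ε j ^ p.2 j)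
    (hT : ∀ j k, T j k = Real.log ((e j.castSucc (((ε k : 𝓞 K) : K))) ^ (e j.castSucc).mult))
    (h𝔞 : 𝔞 ≠ 0) (hB : 0 < B) (hI : ∀ y ∈ I, y ≠ 0)
    (hIcover : ∀ x : K, x ∈ (𝔞 : FractionalIdeal (𝓞 K)⁰ K) → x ≠ 0 →
      |(Algebra.norm ℚ x : ℝ)| ≤ B * Ideal.absNorm 𝔞 →
      ∃ y ∈ I, ∃ u : (𝓞 K)ˣ, x = ((u : 𝓞 K) : K) * y)
    (hA : ∀ w : InfinitePlace K, ∀ y ∈ I, A w ≤ Real.log ((w y) ^ w.mult))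
    {x : K} (hx : x ∈ Cset 𝔞 B D) (hx0 : x ≠ 0) :
    ∃ g ∈ Gset e ε T 𝔞 B D A I, ∃ ζ : K, IsRootOfUnity ζ ∧ x = ζ * g := by
  obtain ⟨hx𝔞, hxP, hxN⟩ := hx
  obtain ⟨y, hyI, u, rfl⟩ := hIcover x hx𝔞 hx0 hxN
  obtain ⟨⟨t, m⟩, ⟨ht, rfl⟩, -⟩ := hfund u
  have hgP : ∀ w : InfinitePlace K, w ((∏ j, ε j ^ m j : (𝓞 K)ˣ) * y) ^ w.mult ≤
      (B * Ideal.absNorm 𝔞) ^ ((w.mult : ℝ) / (Module.finrank ℚ K : ℝ)) * Real.exp (D w) :=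
    fun w => by simpa only [Units.coe_mul, mul_assoc, w.apply_mul_of_isOfFinOrder ht] using hxP w
  have hL : ∀ w, Real.log (w (∏ j, ε j ^ m j : (𝓞 K)ˣ) ^ w.mult) ≤ Lconst B 𝔞 D A w :=
    fun w => log_pow_mult_le_Lconst h𝔞 hB (Units.coe_ne_zero _) (hI y hyI) (hA w y hyI) (hgP w)
  refine ⟨_, ⟨y, hyI, m, fun j => ?_, ?_, rfl, hgP⟩, t, isRootOfUnity_coe_of_isOfFinOrder ht,
    by simp only [Units.coe_mul, mul_assoc]⟩
  · exact (mulVec_eq_log_pow_mult hT m j).trans_le (hL _)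
  · simp only [mulVec_eq_log_pow_mult hT, sum_castSucc_log_pow_mult]
    exact neg_le_neg (hL _)

end Gset

theorem statement14_general (r : ℕ)
    (e : Fin (r + 1) ≃ InfinitePlace K) (ε : Fin r → (𝓞 K)ˣ)
    (hfund : ∀ v : (𝓞 K)ˣ, ∃! p : (𝓞 K)ˣ × (Fin r → ℤ),
      IsOfFinOrder p.1 ∧ v = p.1 * ∏ j, ε j ^ p.2 j)
    (T : Matrix (Fin r) (Fin r) ℝ)
    (hT : ∀ j k, T j k = Real.log ((e j.castSucc (((ε k : 𝓞 K) : K))) ^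
      (e j.castSucc).mult))
    (𝔞 : Ideal (𝓞 K)) (h𝔞 : 𝔞 ≠ 0) (B : ℝ) (hB : 1 ≤ B)
    (D : InfinitePlace K → ℝ) (I : Finset K)
    (hImem : ∀ y ∈ I, y ∈ (𝔞 : FractionalIdeal (𝓞 K)⁰ K) ∧ y ≠ 0 ∧
      |(Algebra.norm ℚ y : ℝ)| ≤ B * Ideal.absNorm 𝔞)
    (hIcover : ∀ x : K, x ∈ (𝔞 : FractionalIdeal (𝓞 K)⁰ K) → x ≠ 0 →
      |(Algebra.norm ℚ x : ℝ)| ≤ B * Ideal.absNorm 𝔞 →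
      ∃ y ∈ I, ∃ u : (𝓞 K)ˣ, x = ((u : 𝓞 K) : K) * y)
    (hIdist : ∀ y ∈ I, ∀ y' ∈ I, (∃ u : (𝓞 K)ˣ, y' = ((u : 𝓞 K) : K) * y) → y' = y)
    (A : InfinitePlace K → ℝ)
    (hA : ∀ w : InfinitePlace K, ∀ y ∈ I, A w ≤ Real.log ((w y) ^ w.mult))
    (G : Set K)
    (hG : G = {g : K | ∃ y ∈ I, ∃ m : Fin r → ℤ,
      (∀ j : Fin r, T.mulVec (fun k => (m k : ℝ)) j ≤ Lconst B 𝔞 D A (e j.castSucc)) ∧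
      -(Lconst B 𝔞 D A (e (Fin.last r))) ≤ ∑ j, T.mulVec (fun k => (m k : ℝ)) j ∧
      g = ((∏ j, ε j ^ m j : (𝓞 K)ˣ) : 𝓞 K) * y ∧
      (∀ w : InfinitePlace K,
        (w g) ^ w.mult ≤
          (B * Ideal.absNorm 𝔞) ^ ((w.mult : ℝ) / (Module.finrank ℚ K : ℝ)) *
            Real.exp (D w))}) :
    G ⊆ Cset 𝔞 B D ∧
    (∀ g ∈ G, g ≠ 0) ∧
    (∀ g ∈ G, ∀ g' ∈ G, (∃ ζ : K, IsRootOfUnity ζ ∧ g' = ζ * g) → g' = g) ∧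
    (∀ x ∈ Cset 𝔞 B D, x = 0 ∨ ∃ g ∈ G, ∃ ζ : K, IsRootOfUnity ζ ∧ x = ζ * g) := by
  change G = Gset e ε T 𝔞 B D A I at hG
  subst hG
  have hI : ∀ y ∈ I, y ≠ 0 := fun y hy => (hImem y hy).2.1
  refine ⟨Gset_subset_Cset hImem, fun g => ne_zero_of_mem_Gset hI,
    fun g hg g' hg' ⟨ζ, hζ, h⟩ => eq_of_mem_Gset_of_eq_mul hfund hI hIdist hg hg' hζ h,
    fun x hx => or_iff_not_imp_left.mpr fun hx0 => ?_⟩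
  exact exists_mem_Gset_of_mem_Cset hfund hT h𝔞 (zero_lt_one.trans_le hB) hI hIcover hA hx hx0

/-- The numbers `g = ε_1^{n_1}···ε_r^{n_r}·y`, with `y ∈ I(𝔞,B)`,
`(n_1,...,n_r) ∈ ℤ^r ∩ T⁻¹(U(𝔞,B))` and `Φ(g) ∈ P(𝔞,B)`, together with `0`, form a
complete set of representatives for `C(𝔞,B)/μ_K`. -/
theorem statement14 (r : ℕ) (hr : 1 ≤ r)
    (e : Fin (r + 1) ≃ InfinitePlace K) (ε : Fin r → (𝓞 K)ˣ)
    (hfund : ∀ v : (𝓞 K)ˣ, ∃! p : (𝓞 K)ˣ × (Fin r → ℤ),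
      IsOfFinOrder p.1 ∧ v = p.1 * ∏ j, ε j ^ p.2 j)
    (T : Matrix (Fin r) (Fin r) ℝ)
    (hT : ∀ j k, T j k = Real.log ((e j.castSucc (((ε k : 𝓞 K) : K))) ^
      (e j.castSucc).mult))
    (𝔞 : Ideal (𝓞 K)) (h𝔞 : 𝔞 ≠ 0) (B : ℝ) (hB : 1 ≤ B)
    (D : InfinitePlace K → ℝ) (I : Finset K)
    (hImem : ∀ y ∈ I, y ∈ (𝔞 : FractionalIdeal (𝓞 K)⁰ K) ∧ y ≠ 0 ∧
      |(Algebra.norm ℚ y : ℝ)| ≤ B * Ideal.absNorm 𝔞)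
    (hIcover : ∀ x : K, x ∈ (𝔞 : FractionalIdeal (𝓞 K)⁰ K) → x ≠ 0 →
      |(Algebra.norm ℚ x : ℝ)| ≤ B * Ideal.absNorm 𝔞 →
      ∃ y ∈ I, ∃ u : (𝓞 K)ˣ, x = ((u : 𝓞 K) : K) * y)
    (hIdist : ∀ y ∈ I, ∀ y' ∈ I, (∃ u : (𝓞 K)ˣ, y' = ((u : 𝓞 K) : K) * y) → y' = y)
    (A : InfinitePlace K → ℝ)
    (hA : ∀ w : InfinitePlace K, ∀ y ∈ I, A w ≤ Real.log ((w y) ^ w.mult))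
    (hA' : I.Nonempty → ∀ w : InfinitePlace K,
      ∃ y ∈ I, A w = Real.log ((w y) ^ w.mult))
    (G : Set K)
    (hG : G = {g : K | ∃ y ∈ I, ∃ m : Fin r → ℤ,
      (∀ j : Fin r, T.mulVec (fun k => (m k : ℝ)) j ≤ Lconst B 𝔞 D A (e j.castSucc)) ∧
      -(Lconst B 𝔞 D A (e (Fin.last r))) ≤ ∑ j, T.mulVec (fun k => (m k : ℝ)) j ∧
      g = ((∏ j, ε j ^ m j : (𝓞 K)ˣ) : 𝓞 K) * y ∧
      (∀ w : InfinitePlace K,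
        (w g) ^ w.mult ≤
          (B * Ideal.absNorm 𝔞) ^ ((w.mult : ℝ) / (Module.finrank ℚ K : ℝ)) *
            Real.exp (D w))}) :
    G ⊆ Cset 𝔞 B D ∧
    (∀ g ∈ G, g ≠ 0) ∧
    (∀ g ∈ G, ∀ g' ∈ G, (∃ ζ : K, IsRootOfUnity ζ ∧ g' = ζ * g) → g' = g) ∧
    (∀ x ∈ Cset 𝔞 B D, x = 0 ∨ ∃ g ∈ G, ∃ ζ : K, IsRootOfUnity ζ ∧ x = ζ * g) :=
  statement14_general r e ε hfund T hT 𝔞 h𝔞 B hB D I hImem hIcover hIdist A hA G hG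
end
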